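/- arXiv:2407.09988 — 4 statements merged into one kernel-verified Lean document; each statement's English description precedes it below -/
import Mathlib

section
/- Let $Q = k[x_0,\dots,x_{n+1}]$, $\operatorname{char} k = 0$, $f$ homogeneous of degree $e \ge 1$, $t$ of homological degree $-2$ and internal degree $-e$, $u$ of degree $0$ internally. On the complex $\Omega^\bullet_Q[[v]][t,t^{-1}]$ ($v = ut^{-1}$) with differential $ud_Q + \lambda_{t\,df}$, the endomorphism $h = u\,\partial/\partial t + \lambda_f$ is chain homotopic to $-\frac{v}{e}\Gamma$, where $\Gamma$ is the operator defined by $\Gamma(\omega v^m t^j) = (\deg \omega + em - ej)\,\omega v^m t^j$ for internally homogeneous $\omega \in \Omega^\bullet_Q$; an explicit homotopy is $\varepsilon_Q/(et)$, the Euler contraction divided by $et$. -/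
open MvPolynomial

noncomputable section

/-- Algebraic forms on `𝔸^N`: coefficient families indexed by subsets of variables. -/
abbrev PolyForm (k : Type*) [CommRing k] (N : ℕ) :=
  Finset (Fin N) → MvPolynomial (Fin N) k

/-- The Koszul sign `(-1)^{#{j ∈ S : j < i}}` for inserting `dx_i` into `dx_S`. -/
def insertSign {N : ℕ} (i : Fin N) (S : Finset (Fin N)) : ℤ :=
  (-1) ^ (S.filter (· < i)).card

/-- The de Rham differential `d_Q`. -/
def dForm {k : Type*} [CommRing k] {N : ℕ} (ω : PolyForm k N) : PolyForm k N :=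
  fun T => ∑ i ∈ T, insertSign i (T.erase i) • pderiv i (ω (T.erase i))

/-- Contraction `ε_Q` against the Euler derivation `g ↦ deg(g)·g`. -/
def epsForm {k : Type*} [CommRing k] {N : ℕ} (ω : PolyForm k N) : PolyForm k N :=
  fun S => ∑ i ∈ Sᶜ, insertSign i S • (X i * ω (insert i S))

/-- Left exterior multiplication by the 1-form `∑ᵢ cᵢ dxᵢ`. -/
def lamForm {k : Type*} [CommRing k] {N : ℕ} (c : Fin N → MvPolynomial (Fin N) k)
    (ω : PolyForm k N) : PolyForm k N :=
  fun T => ∑ i ∈ T, insertSign i (T.erase i) • (c i * ω (T.erase i))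

/-- Internal grading operator on polynomials: `g ↦ ∑_m m·g_m`. -/
def gammaPoly {k : Type*} [CommRing k] {N : ℕ} (g : MvPolynomial (Fin N) k) :
    MvPolynomial (Fin N) k :=
  ∑ m ∈ Finset.range (g.totalDegree + 1), m • homogeneousComponent m g

/-- Internal grading operator on forms: `Γ_Q(g·dx_S) = (deg g + #S)·g·dx_S`. -/
def gammaForm {k : Type*} [CommRing k] {N : ℕ} (ω : PolyForm k N) : PolyForm k N :=
  fun S => gammaPoly (ω S) + S.card • ω S

/-! ### Auxiliary lemmas -/

lemma insertSign_sq {N : ℕ} (i : Fin N) (S : Finset (Fin N)) :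
    insertSign i S * insertSign i S = 1 := by
  rw [insertSign, ← pow_add]
  exact Even.neg_one_pow ⟨_, rfl⟩

lemma insertSign_insert {N : ℕ} {a : Fin N} {S : Finset (Fin N)} (b : Fin N) (ha : a ∉ S) :
    insertSign b (insert a S) = (if a < b then -1 else 1) * insertSign b S := by
  unfold insertSign
  rw [Finset.filter_insert]
  split
  · rw [Finset.card_insert_of_notMem (by simp [ha]), pow_succ, mul_comm]
  · rw [one_mul]

lemma sign_swap {N : ℕ} {i j : Fin N} {T : Finset (Fin N)} (hi : i ∈ T) (hj : j ∉ T)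
    (hij : i ≠ j) :
    insertSign j T * insertSign i (insert j (T.erase i))
      = -(insertSign i (T.erase i) * insertSign j (T.erase i)) := by
  have h1 : insertSign j T = (if i < j then -1 else 1) * insertSign j (T.erase i) := by
    conv_lhs => rw [← Finset.insert_erase hi]
    exact insertSign_insert j (Finset.notMem_erase i T)
  have h2 : insertSign i (insert j (T.erase i))
      = (if j < i then -1 else 1) * insertSign i (T.erase i) :=
    insertSign_insert i (fun h => hj (Finset.mem_of_mem_erase h))
  rw [h1, h2]
  rcases lt_or_gt_of_ne hij with h | h
  · simp [h, not_lt_of_gt h]; ring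
  · simp [h, not_lt_of_gt h]; ring

section Aux

variable {k : Type*} [CommRing k] {N : ℕ}

lemma X_mul_pderiv_monomial (i : Fin N) (s : Fin N →₀ ℕ) (a : k) :
    X i * pderiv i (monomial s a) = (s i) • monomial s a := by
  rw [pderiv_monomial]
  rcases Nat.eq_zero_or_pos (s i) with h | h
  · simp [h]
  · have hle : Finsupp.single i 1 ≤ s := by
      rw [Finsupp.single_le_iff]; exact h
    rw [X, monomial_mul, one_mul, add_tsub_cancel_of_le hle, smul_monomial]
    congr 1
    rw [nsmul_eq_mul, mul_comm]

lemma euler_monomial (s : Fin N →₀ ℕ) (a : k) :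
    ∑ i : Fin N, X i * pderiv i (monomial s a) = (∑ i : Fin N, s i) • monomial s a := by
  simp_rw [_root_.X_mul_pderiv_monomial, Finset.sum_smul]

lemma euler_homog {e : ℕ} {f : MvPolynomial (Fin N) k} (hf : f.IsHomogeneous e) :
    ∑ i : Fin N, X i * pderiv i f = e • f := by
  conv_lhs => rw [f.as_sum]
  conv_rhs => rw [f.as_sum]
  rw [Finset.smul_sum]
  simp only [map_sum, Finset.mul_sum]
  rw [Finset.sum_comm]
  refine Finset.sum_congr rfl fun s hs => ?_
  rw [euler_monomial]
  congr 1
  have hco : coeff s f ≠ 0 := mem_support_iff.mp hs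
  have := hf hco
  rw [← this, Finsupp.weight_apply, Finsupp.sum_fintype]
  · simp
  · simp

lemma euler_gamma (g : MvPolynomial (Fin N) k) :
    ∑ i : Fin N, X i * pderiv i g = gammaPoly g := by
  conv_lhs => rw [← sum_homogeneousComponent g]
  simp only [map_sum, Finset.mul_sum]
  rw [Finset.sum_comm, gammaPoly]
  exact Finset.sum_congr rfl fun m _ => euler_homog (homogeneousComponent_isHomogeneous m g)

lemma anticomm (δ : Fin N → MvPolynomial (Fin N) k →+ MvPolynomial (Fin N) k)
    (hc : ∀ i j : Fin N, i ≠ j → ∀ g, δ i (X j * g) = X j * δ i g)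
    (ω : PolyForm k N) (T : Finset (Fin N)) :
    (∑ i ∈ T, insertSign i (T.erase i) • δ i (epsForm ω (T.erase i)))
      + epsForm (fun S => ∑ i ∈ S, insertSign i (S.erase i) • δ i (ω (S.erase i))) T
    = (∑ i ∈ T, δ i (X i * ω T)) + ∑ i ∈ Tᶜ, X i * δ i (ω T) := by
  classical
  have key1 : ∀ i ∈ T,
      insertSign i (T.erase i) • δ i (epsForm ω (T.erase i))
        = δ i (X i * ω T)
          + ∑ j ∈ Tᶜ, (insertSign i (T.erase i) * insertSign j (T.erase i))
              • δ i (X j * ω (insert j (T.erase i))) := by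
    intro i hi
    have hic : i ∉ Tᶜ := by simp [hi]
    rw [epsForm, Finset.compl_erase, Finset.sum_insert hic, Finset.insert_erase hi,
      map_add, map_sum, smul_add, map_zsmul, smul_smul, insertSign_sq, one_smul,
      Finset.smul_sum]
    congr 1
    refine Finset.sum_congr rfl fun j _ => ?_
    rw [map_zsmul, smul_smul]
  have key2 : ∀ j ∈ Tᶜ,
      insertSign j T • (X j * ∑ i ∈ insert j T,
          insertSign i ((insert j T).erase i) • δ i (ω ((insert j T).erase i)))
        = X j * δ j (ω T)
          + ∑ i ∈ T, (insertSign j T * insertSign i (insert j (T.erase i)))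
              • δ i (X j * ω (insert j (T.erase i))) := by
    intro j hj
    have hjT : j ∉ T := Finset.mem_compl.mp hj
    rw [Finset.sum_insert hjT, Finset.erase_insert hjT, mul_add, smul_add,
      mul_smul_comm, smul_smul, insertSign_sq, one_smul, Finset.mul_sum, Finset.smul_sum]
    congr 1
    refine Finset.sum_congr rfl fun i hi => ?_
    have hij : i ≠ j := fun h => hjT (h ▸ hi)
    rw [Finset.erase_insert_of_ne hij.symm, mul_smul_comm, smul_smul, hc i j hij]
  rw [Finset.sum_congr rfl key1]
  have heps : epsForm (fun S => ∑ i ∈ S, insertSign i (S.erase i) • δ i (ω (S.erase i))) T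
      = ∑ j ∈ Tᶜ, insertSign j T • (X j * ∑ i ∈ insert j T,
          insertSign i ((insert j T).erase i) • δ i (ω ((insert j T).erase i))) := rfl
  rw [heps, Finset.sum_congr rfl key2, Finset.sum_add_distrib, Finset.sum_add_distrib]
  have hzero : (∑ i ∈ T, ∑ j ∈ Tᶜ, (insertSign i (T.erase i) * insertSign j (T.erase i))
              • δ i (X j * ω (insert j (T.erase i))))
      + ∑ j ∈ Tᶜ, ∑ i ∈ T, (insertSign j T * insertSign i (insert j (T.erase i)))
              • δ i (X j * ω (insert j (T.erase i))) = 0 := by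
    rw [Finset.sum_comm (s := Tᶜ), ← Finset.sum_add_distrib]
    refine Finset.sum_eq_zero fun i hi => ?_
    rw [← Finset.sum_add_distrib]
    refine Finset.sum_eq_zero fun j hj => ?_
    have hij : i ≠ j := fun h => (Finset.mem_compl.mp hj) (h ▸ hi)
    rw [sign_swap hi (Finset.mem_compl.mp hj) hij, neg_smul, add_neg_cancel]
  rw [add_add_add_comm, hzero, add_zero]

lemma lam_eps (c : Fin N → MvPolynomial (Fin N) k) (ω : PolyForm k N) (T : Finset (Fin N)) :
    lamForm c (epsForm ω) T + epsForm (lamForm c ω) T = (∑ i : Fin N, X i * c i) * ω T := by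
  have h := anticomm (fun i => AddMonoidHom.mulLeft (c i))
    (fun i j _ g => mul_left_comm (c i) (X j) g) ω T
  simp only [AddMonoidHom.coe_mulLeft] at h
  have h1 : lamForm c (epsForm ω) T
      = ∑ i ∈ T, insertSign i (T.erase i) • (c i * epsForm ω (T.erase i)) := rfl
  have h2 : epsForm (lamForm c ω) T
      = epsForm (fun S => ∑ i ∈ S, insertSign i (S.erase i) • (c i * ω (S.erase i))) T := rfl
  rw [h1, h2, h, Finset.sum_mul, ← Finset.sum_add_sum_compl T (fun i => (X i * c i) * ω T)]
  congr 1
  · exact Finset.sum_congr rfl fun i _ => by ring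
  · exact Finset.sum_congr rfl fun i _ => by ring

lemma d_eps (ω : PolyForm k N) (T : Finset (Fin N)) :
    dForm (epsForm ω) T + epsForm (dForm ω) T = gammaForm ω T := by
  have h := anticomm (fun i => ((pderiv i : Derivation k (MvPolynomial (Fin N) k) _) :
      MvPolynomial (Fin N) k →ₗ[k] MvPolynomial (Fin N) k).toAddMonoidHom)
    (fun i j hij g => by simp [pderiv_mul, pderiv_X_of_ne hij.symm]) ω T
  simp only [LinearMap.toAddMonoidHom_coe, Derivation.coeFn_coe] at h
  have h1 : dForm (epsForm ω) T
      = ∑ i ∈ T, insertSign i (T.erase i) • pderiv i (epsForm ω (T.erase i)) := rfl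
  have h2 : epsForm (dForm ω) T
      = epsForm (fun S => ∑ i ∈ S, insertSign i (S.erase i) • pderiv i (ω (S.erase i))) T := rfl
  rw [h1, h2, h]
  have h3 : ∀ i ∈ T, pderiv i (X i * ω T) = ω T + X i * pderiv i (ω T) := by
    intro i _
    rw [pderiv_mul, pderiv_X_self, one_mul]
  rw [Finset.sum_congr rfl h3, Finset.sum_add_distrib, Finset.sum_const, add_assoc,
    Finset.sum_add_sum_compl T (fun i => X i * pderiv i (ω T)), euler_gamma, gammaForm,
    add_comm]

lemma lamForm_smul (c : Fin N → MvPolynomial (Fin N) k) (a : k) (ω : PolyForm k N) :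
    lamForm c (a • ω) = a • lamForm c ω := by
  funext T
  simp only [lamForm, Pi.smul_apply, Finset.smul_sum, mul_smul_comm]
  exact Finset.sum_congr rfl fun i _ => (smul_comm _ _ _)

lemma dForm_smul (a : k) (ω : PolyForm k N) : dForm (a • ω) = a • dForm ω := by
  funext T
  simp only [dForm, Pi.smul_apply, Finset.smul_sum]
  refine Finset.sum_congr rfl fun i _ => ?_
  rw [Derivation.map_smul]
  exact smul_comm _ _ _

lemma epsForm_add (ω ψ : PolyForm k N) : epsForm (ω + ψ) = epsForm ω + epsForm ψ := by
  funext T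
  simp only [epsForm, Pi.add_apply, mul_add, smul_add, Finset.sum_add_distrib]

end Aux

/-- let `Q = k[x₀,…,x_{n+1}]`, `char k = 0`, `f` homogeneous of degree
`e ≥ 1`.  On the de Rham negative cyclic complex `Ω^•_Q[[v]][t,t⁻¹]` of
`(Q[t,t⁻¹], ft)` (elements are families `F i m` = the form coefficient of `tⁱ vᵐ`,
`v = u t⁻¹`), with differential `D = u d_Q + λ_{t df}`, the endomorphism
`h = u ∂/∂t + λ_f` is chain homotopic to `-(v/e)Γ`, with explicit homotopy
`E = ε_Q/(et)` (the Euler contraction divided by `et`):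
`h + (v/e)Γ = D ∘ E + E ∘ D`. -/
theorem stmt_8 (k : Type*) [Field k] [CharZero k] (n e : ℕ) (he : 1 ≤ e)
    (f : MvPolynomial (Fin (n + 2)) k) (hf : f.IsHomogeneous e) :
    let M := ℤ → ℕ → PolyForm k (n + 2)
    -- `u d_Q` : multiply by `u = vt` and apply the relative de Rham differential
    let uD : M → M := fun F i m => match m with
      | 0 => 0
      | m' + 1 => dForm (F (i - 1) m')
    -- `λ_{t df}` : left multiplication by `t·df`
    let ltdf : M → M := fun F i m => lamForm (fun j => pderiv j f) (F (i - 1) m)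
    -- the differential of the de Rham HN complex
    let D : M → M := fun F => uD F + ltdf F
    -- `u ∂/∂t` : note `u ∂/∂t (ω v^{m} tⁱ) = (i - m)·ω v^{m+1} tⁱ`
    let uDt : M → M := fun F i m => match m with
      | 0 => 0
      | m' + 1 => ((i : ℤ) - (m' : ℤ)) • F i m'
    -- `λ_f` : left multiplication by `f`
    let lf : M → M := fun F i m S => f * F i m S
    -- `(v/e)·Γ`, where `Γ(ω vᵐ tʲ) = (deg ω + em - ej)·ω vᵐ tʲ`
    let vΓ : M → M := fun F i m => match m with
      | 0 => 0
      | m' + 1 => gammaForm (F i m') + (e * (m' : ℤ) - e * i) • F i m'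
    -- the homotopy `E = ε_Q/(et)`
    let E : M → M := fun F i m => (e : k)⁻¹ • epsForm (F (i + 1) m)
    ∀ F : M,
      (uDt F + lf F) + (e : k)⁻¹ • vΓ F = D (E F) + E (D F) := by
  intro M uD ltdf D uDt lf vΓ E F
  have hek : (e : k) ≠ 0 := Nat.cast_ne_zero.mpr (by omega)
  funext i m
  cases m with
  | zero =>
    funext S
    simp only [M, uD, ltdf, D, uDt, lf, vΓ, E, Pi.add_apply, Pi.smul_apply, Pi.zero_apply,
      zero_add, add_zero, smul_zero, sub_add_cancel, add_sub_cancel_right]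
    rw [lamForm_smul]
    simp only [Pi.smul_apply]
    have h2 := lam_eps (fun j => pderiv j f) (F i 0) S
    rw [show (∑ i : Fin (n+2), X i * (fun j => pderiv j f) i) = e • f from euler_homog hf,
      smul_mul_assoc] at h2
    rw [eq_sub_of_add_eq' h2]
    match_scalars <;> field_simp <;> simp
  | succ m' =>
    funext S
    simp only [M, uD, ltdf, D, uDt, lf, vΓ, E, Pi.add_apply, Pi.smul_apply, Pi.zero_apply,
      zero_add, add_zero, smul_zero, sub_add_cancel, add_sub_cancel_right]
    rw [dForm_smul, lamForm_smul, epsForm_add]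
    simp only [Pi.smul_apply, Pi.add_apply]
    have h1 := d_eps (F i m') S
    have h2 := lam_eps (fun j => pderiv j f) (F i (m' + 1)) S
    rw [show (∑ i : Fin (n+2), X i * (fun j => pderiv j f) i) = e • f from euler_homog hf,
      smul_mul_assoc] at h2
    rw [eq_sub_of_add_eq' h1, eq_sub_of_add_eq' h2]
    match_scalars <;> (field_simp; try ring)


end
end

section
/- Let $f \in \mathbb{C}[x_0, x_1]$ be a squarefree homogeneous polynomial of degree $d$, and factor $f = \ell_1 \cdots \ell_d$ into pairwise non-proportional linear forms. Let $R = \mathbb{C}[x_0,x_1]/(f)$ and $M_i = \mathbb{C}[x_0,x_1]/(\ell_i)$, an $R$-module. Then in the Grothendieck group of the singularity category $\mathrm{D}^{sg}(R) = \mathrm{D}^b(R)/\mathrm{Perf}(R)$, the relation $\sum_{i=1}^d [M_i] = 0$ holds. -/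
open MvPolynomial

/-- let `f = ℓ₁⋯ℓ_d ∈ ℂ[x₀,x₁]` be a squarefree homogeneous polynomial,
a product of pairwise non-proportional linear forms, `R = ℂ[x₀,x₁]/(f)`, and
`Mᵢ = ℂ[x₀,x₁]/(ℓᵢ)` (an `R`-module).  Then `∑ᵢ [Mᵢ] = 0` in `K₀` of the singularity
category `D^sg(R) = D^b(R)/Perf(R)`.

`K₀(D^sg(R))` is encoded by its universal property: a class vanishes there iff it is
killed by every assignment `χ` of values in an abelian group to finitely generated
`R`-modules which is invariant under isomorphism, additive on short exact sequences of
finitely generated modules, and vanishes on finitely generated projectives (the image of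
`K₀(Perf R) → G₀(R)`). -/
theorem stmt_13 (d : ℕ) (hd : 1 ≤ d) (a b : Fin d → ℂ)
    (hnz : ∀ i, (a i, b i) ≠ (0, 0))
    (hnonprop : ∀ i j, i ≠ j → a i * b j ≠ a j * b i)
    (A : Type) [AddCommGroup A] :
    ∀ (ℓ : Fin d → MvPolynomial (Fin 2) ℂ),
      (∀ i, ℓ i = C (a i) * X 0 + C (b i) * X 1) →
      ∀ (R : Type), ∀ (_ : CommRing R),
      ∀ (π : MvPolynomial (Fin 2) ℂ →+* R),
        Function.Surjective π →
        RingHom.ker π = Ideal.span {∏ i, ℓ i} →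
      ∀ χ : ModuleCat.{0} R → A,
        -- iso invariance
        (∀ M N : ModuleCat.{0} R, Nonempty (M ≃ₗ[R] N) → χ M = χ N) →
        -- additivity on short exact sequences of finitely generated modules
        (∀ (M N P : ModuleCat.{0} R), Module.Finite R M → Module.Finite R N →
          Module.Finite R P → ∀ (ι : M →ₗ[R] N) (p : N →ₗ[R] P),
            Function.Injective ι → Function.Surjective p → Function.Exact ι p →
              χ N = χ M + χ P) →
        -- vanishing on perfect complexes, i.e. on finitely generated projectives
        (∀ M : ModuleCat.{0} R, Module.Finite R M → Module.Projective R M → χ M = 0) →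
        ∑ i : Fin d, χ (ModuleCat.of R (R ⧸ Ideal.span {π (ℓ i)})) = 0 := by
  intro ℓ hℓ R _ π hπ hker χ hiso hadd hproj
  classical
  -- the linear forms are nonzero
  have hℓne : ∀ i, ℓ i ≠ 0 := by
    intro i hi
    apply hnz i
    have h0 := congrArg (eval (fun j : Fin 2 => if j = 0 then (1:ℂ) else 0)) hi
    have h1 := congrArg (eval (fun j : Fin 2 => if j = 1 then (1:ℂ) else 0)) hi
    rw [hℓ i] at h0 h1
    simp at h0 h1
    exact Prod.ext h0 h1
  have hfin : ∀ I : Ideal R, Module.Finite R (R ⧸ I) := fun I =>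
    Module.Finite.of_surjective I.mkQ (Submodule.mkQ_surjective I)
  have hχR : χ (ModuleCat.of R R) = 0 := hproj _ (Module.Finite.self R) (inferInstance : Module.Projective R R)
  -- key: additivity along factorizations g*h ∣ f
  have key : ∀ g h : MvPolynomial (Fin 2) ℂ, g ≠ 0 → g * h ∣ ∏ i, ℓ i →
      χ (ModuleCat.of R (R ⧸ Ideal.span {π (g*h)})) =
      χ (ModuleCat.of R (R ⧸ Ideal.span {π h})) +
      χ (ModuleCat.of R (R ⧸ Ideal.span {π g})) := by
    rintro g h hg ⟨w, hw⟩
    set J : Ideal R := Ideal.span {π h} with hJ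
    set I : Ideal R := Ideal.span {π (g*h)} with hI
    set K : Ideal R := Ideal.span {π g} with hK
    have hle : J ≤ Submodule.comap (LinearMap.lsmul R R (π g)) I := by
      intro x hx
      rw [hJ, Ideal.mem_span_singleton] at hx
      obtain ⟨c, rfl⟩ := hx
      rw [Submodule.mem_comap, hI, Ideal.mem_span_singleton]
      exact ⟨c, by simp [map_mul, mul_assoc]⟩
    set ι : (R ⧸ J) →ₗ[R] (R ⧸ I) := Submodule.mapQ J I (LinearMap.lsmul R R (π g)) hle with hι
    have hle2 : I ≤ Submodule.comap (LinearMap.id : R →ₗ[R] R) K := by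
      intro x hx
      rw [hI, Ideal.mem_span_singleton] at hx
      rw [Submodule.mem_comap, hK, Ideal.mem_span_singleton]
      exact dvd_trans ⟨π h, by rw [map_mul]⟩ hx
    set p : (R ⧸ I) →ₗ[R] (R ⧸ K) := Submodule.mapQ I K LinearMap.id hle2 with hp
    have hinj : Function.Injective ι := by
      rw [← LinearMap.ker_eq_bot, Submodule.eq_bot_iff]
      intro y hy
      obtain ⟨x, rfl⟩ := Submodule.Quotient.mk_surjective J y
      rw [LinearMap.mem_ker, hι, Submodule.mapQ_apply, Submodule.Quotient.mk_eq_zero,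
        hI, Ideal.mem_span_singleton] at hy
      obtain ⟨c, hc⟩ := hy
      obtain ⟨x', rfl⟩ := hπ x
      obtain ⟨c', rfl⟩ := hπ c
      have : π (g * x' - g * h * c') = 0 := by
        simp only [map_sub, map_mul, sub_eq_zero]
        simpa [LinearMap.lsmul_apply, smul_eq_mul, map_mul] using hc
      have hmem : g * x' - g * h * c' ∈ RingHom.ker π := this
      rw [hker, Ideal.mem_span_singleton] at hmem
      obtain ⟨u, hu⟩ := hmem
      rw [hw] at hu
      have : g * x' = g * (h * c' + h * (w * u)) := by ring_nf; ring_nf at hu; linear_combination hu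
      have hx' : x' = h * (c' + w * u) := by
        have := mul_left_cancel₀ hg this
        rw [this]; ring
      rw [Submodule.Quotient.mk_eq_zero, hJ, Ideal.mem_span_singleton]
      exact ⟨π (c' + w * u), by rw [hx', map_mul]⟩
    have hsurj : Function.Surjective p := by
      intro y
      obtain ⟨x, rfl⟩ := Submodule.Quotient.mk_surjective K y
      exact ⟨Submodule.Quotient.mk x, by rw [hp, Submodule.mapQ_apply, LinearMap.id_apply]⟩
    have hexact : Function.Exact ι p := by
      rw [LinearMap.exact_iff]
      ext y
      obtain ⟨x, rfl⟩ := Submodule.Quotient.mk_surjective I y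
      constructor
      · rintro hy
        rw [LinearMap.mem_ker, hp, Submodule.mapQ_apply, LinearMap.id_apply,
          Submodule.Quotient.mk_eq_zero, hK, Ideal.mem_span_singleton] at hy
        obtain ⟨c, rfl⟩ := hy
        exact ⟨Submodule.Quotient.mk c, by
          rw [hι, Submodule.mapQ_apply, LinearMap.lsmul_apply, smul_eq_mul]⟩
      · rintro ⟨z, hz⟩
        obtain ⟨c, rfl⟩ := Submodule.Quotient.mk_surjective J z
        rw [hι, Submodule.mapQ_apply, LinearMap.lsmul_apply, smul_eq_mul] at hz
        rw [LinearMap.mem_ker, hp, ← hz, Submodule.mapQ_apply, LinearMap.id_apply,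
          Submodule.Quotient.mk_eq_zero, hK, Ideal.mem_span_singleton]
        exact ⟨c, rfl⟩
    exact hadd (ModuleCat.of R (R ⧸ J)) (ModuleCat.of R (R ⧸ I)) (ModuleCat.of R (R ⧸ K))
      (hfin J) (hfin I) (hfin K) ι p hinj hsurj hexact
  -- χ of R ⧸ ⊤ vanishes
  have htop : χ (ModuleCat.of R (R ⧸ (⊤ : Ideal R))) = 0 := by
    have hexact : Function.Exact (LinearMap.id : R →ₗ[R] R) (⊤ : Ideal R).mkQ := by
      intro y
      constructor
      · intro _; exact ⟨y, rfl⟩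
      · intro _
        rw [Submodule.mkQ_apply, Submodule.Quotient.mk_eq_zero]
        trivial
    have h := hadd (ModuleCat.of R R) (ModuleCat.of R R)
      (ModuleCat.of R (R ⧸ (⊤ : Ideal R))) (Module.Finite.self R) (Module.Finite.self R)
      (hfin ⊤) LinearMap.id (⊤ : Ideal R).mkQ (fun _ _ h => h)
      (Submodule.mkQ_surjective _) hexact
    rw [left_eq_add] at h
    exact h
  -- main induction over subsets
  have main : ∀ s : Finset (Fin d),
      χ (ModuleCat.of R (R ⧸ Ideal.span {π (∏ i ∈ s, ℓ i)})) =
      ∑ i ∈ s, χ (ModuleCat.of R (R ⧸ Ideal.span {π (ℓ i)})) := by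
    intro s
    induction s using Finset.induction_on with
    | empty =>
        rw [Finset.prod_empty, Finset.sum_empty, map_one, Ideal.span_singleton_one]
        exact htop
    | @insert i s hi ih =>
        rw [Finset.prod_insert hi, Finset.sum_insert hi]
        have hdvd : ℓ i * ∏ j ∈ s, ℓ j ∣ ∏ j, ℓ j := by
          rw [← Finset.prod_insert hi]
          exact Finset.prod_dvd_prod_of_subset _ _ _ (Finset.subset_univ _)
        rw [key (ℓ i) (∏ j ∈ s, ℓ j) (hℓne i) hdvd, ih, add_comm]
  have hfzero : π (∏ i, ℓ i) = 0 := by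
    have : (∏ i, ℓ i) ∈ RingHom.ker π := by
      rw [hker]; exact Ideal.mem_span_singleton_self _
    exact this
  have hbot : χ (ModuleCat.of R (R ⧸ Ideal.span {π (∏ i, ℓ i)})) = 0 := by
    rw [hfzero]
    have hspan : (Ideal.span {(0:R)}) = ⊥ := by simp
    have : Nonempty ((ModuleCat.of R (R ⧸ Ideal.span {(0:R)})) ≃ₗ[R] ModuleCat.of R R) :=
      ⟨(Submodule.quotEquivOfEqBot _ hspan)⟩
    rw [hiso _ _ this]
    exact hχR
  rw [← main Finset.univ]
  exact hbot
end

section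
/- Let $\alpha = e^{2\pi i/3}$ and $\omega = dx_0\,dx_1\,dx_2\,dx_3$. The six elements $9(x_1-x_0)(x_3-x_2)\omega$, $9\alpha(\alpha x_1 - x_0)(x_3-x_2)\omega$, $9\alpha(x_1-x_0)(\alpha x_3 - x_2)\omega$, $9\alpha^2(\alpha x_1-x_0)(\alpha x_3 - x_2)\omega$, $9(x_2-x_0)(x_3-x_1)\omega$, $9\alpha(x_2-x_0)(\alpha x_3 - x_1)\omega$ are linearly independent over $\mathbb{C}$ in the degree-$2$ part of the Milnor algebra $\mathbb{C}[x_0,x_1,x_2,x_3]/(x_0^2, x_1^2, x_2^2, x_3^2) \cdot \omega$ of $f = x_0^3 + x_1^3 + x_2^3 + x_3^3$. -/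
open MvPolynomial

lemma coeff_sq_mul (m : Fin 4 →₀ ℕ) (hm : ∀ i, m i ≤ 1) (i : Fin 4) (q : MvPolynomial (Fin 4) ℂ) :
    coeff m (q * X i ^ 2) = 0 := by
  have h2 : (X i : MvPolynomial (Fin 4) ℂ) ^ 2 = monomial (Finsupp.single i 2) 1 := by
    rw [X, monomial_pow]; simp
  rw [h2, coeff_mul_monomial']
  have hle : ¬ Finsupp.single i 2 ≤ m := by
    intro h
    have h1 := h i
    simp at h1
    have := hm i
    omega
  simp [hle]

lemma coeff_mem_J {p : MvPolynomial (Fin 4) ℂ}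
    (hp : p ∈ Ideal.span (Set.range fun i : Fin 4 => (X i : MvPolynomial (Fin 4) ℂ) ^ 2))
    (m : Fin 4 →₀ ℕ) (hm : ∀ i, m i ≤ 1) : coeff m p = 0 := by
  rw [Ideal.mem_span_range_iff_exists_fun] at hp
  obtain ⟨c, rfl⟩ := hp
  rw [coeff_sum]
  exact Finset.sum_eq_zero fun i _ => coeff_sq_mul m hm i (c i)

lemma coeff_XX (i j k l : Fin 4) :
    coeff (Finsupp.single i 1 + Finsupp.single j 1) ((X k : MvPolynomial (Fin 4) ℂ) * X l)
      = if Finsupp.single k 1 + Finsupp.single l 1 = Finsupp.single i 1 + Finsupp.single j 1 then 1 else 0 := by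
  rw [X, X, monomial_mul, coeff_monomial, mul_one]

lemma pullX (i : Fin 4) (c : ℂ) (p : MvPolynomial (Fin 4) ℂ) :
    X i * (C c * p) = C c * (X i * p) := by ring

lemma mono_le (i j : Fin 4) (h : i ≠ j) (k : Fin 4) :
    (Finsupp.single i 1 + Finsupp.single j 1 : Fin 4 →₀ ℕ) k ≤ 1 := by
  simp only [Finsupp.add_apply, Finsupp.single_apply]
  split_ifs with h1 h2
  · exact absurd (h1.trans h2.symm) h
  all_goals omega

/-- with `α = e^{2πi/3}`, the six listed elements are linearly independent
over `ℂ` in (the degree-2 part of) the Milnor algebra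
`ℂ[x₀,x₁,x₂,x₃]/(x₀², x₁², x₂², x₃²)` of `f = x₀³ + x₁³ + x₂³ + x₃³`
(the top-form factor `ω = dx₀dx₁dx₂dx₃` trivializes the rank-one module of top forms). -/
theorem stmt_16 :
    let Q := MvPolynomial (Fin 4) ℂ
    let J : Ideal Q := Ideal.span (Set.range fun i => (X i : Q) ^ 2)
    let a : ℂ := Complex.exp (2 * Real.pi * Complex.I / 3)
    let x : Fin 4 → Q := X
    LinearIndependent ℂ
      (fun j : Fin 6 => Ideal.Quotient.mk J
        (![ 9 * (x 1 - x 0) * (x 3 - x 2),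
            9 * C a * (C a * x 1 - x 0) * (x 3 - x 2),
            9 * C a * (x 1 - x 0) * (C a * x 3 - x 2),
            9 * C (a ^ 2) * (C a * x 1 - x 0) * (C a * x 3 - x 2),
            9 * (x 2 - x 0) * (x 3 - x 1),
            9 * C a * (x 2 - x 0) * (C a * x 3 - x 1)] j)) := by
  intro Q J a x
  unfold Q J x
  have hx : x = X := rfl
  -- cube root facts
  have ha3 : a ^ 3 = 1 := by
    show Complex.exp (2 * Real.pi * Complex.I / 3) ^ 3 = 1
    rw [← Complex.exp_nat_mul]
    rw [show (3:ℕ) * (2 * (Real.pi:ℂ) * Complex.I / 3) = 2 * Real.pi * Complex.I by push_cast; ring]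
    exact Complex.exp_two_pi_mul_I
  have hane : a ≠ 1 := by
    show Complex.exp (2 * Real.pi * Complex.I / 3) ≠ 1
    intro hh
    rw [Complex.exp_eq_one_iff] at hh
    obtain ⟨n, hn⟩ := hh
    have hpi : (2 * (Real.pi:ℂ) * Complex.I) ≠ 0 := by
      simp [Real.pi_ne_zero, Complex.I_ne_zero]
    have h2 : ((3:ℂ) * n - 1) * (2 * Real.pi * Complex.I) = 0 := by
      linear_combination -3 * hn
    have h3 : (3:ℂ) * n - 1 = 0 := by
      rcases mul_eq_zero.mp h2 with h | h
      · exact h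
      · exact absurd h hpi
    have h4 : ((3 * n - 1 : ℤ) : ℂ) = ((0:ℤ):ℂ) := by push_cast; linear_combination h3
    have h5 : (3 * n - 1 : ℤ) = 0 := Int.cast_injective h4
    omega
  have ha : a ^ 2 + a + 1 = 0 := by
    have h0 : (a - 1) * (a ^ 2 + a + 1) = 0 := by linear_combination ha3
    rcases mul_eq_zero.mp h0 with h | h
    · exact absurd (sub_eq_zero.mp h) hane
    · exact h
  have h21 : (2 * a + 1 : ℂ) ≠ 0 := by
    intro h
    have hsq : (2 * a + 1) ^ 2 = -3 := by linear_combination 4 * ha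
    rw [h] at hsq
    norm_num at hsq
  rw [Fintype.linearIndependent_iff]
  intro g hg
  simp only [← Ideal.Quotient.mkₐ_eq_mk ℂ, ← map_smul, ← map_sum] at hg
  rw [Ideal.Quotient.mkₐ_eq_mk, Ideal.Quotient.eq_zero_iff_mem] at hg
  have E01 := coeff_mem_J hg (Finsupp.single 0 1 + Finsupp.single 1 1) (mono_le 0 1 (by decide))
  simp only [coeff_sum, Fin.sum_univ_six, hx, Matrix.cons_val_zero, Matrix.cons_val_one,
    Matrix.head_cons, Matrix.cons_val_two, Matrix.tail_cons, Matrix.cons_val_three,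
    Matrix.cons_val_four, Fin.sum_univ_succ, Matrix.cons_val_succ, Finset.sum_singleton, Fin.sum_univ_zero, coeff_smul, smul_eq_mul,
    show (9 : MvPolynomial (Fin 4) ℂ) = C (9:ℂ) by rw [map_ofNat],
    mul_sub, sub_mul, mul_assoc, coeff_add, coeff_sub, coeff_C_mul, coeff_XX,
    pullX, Finsupp.single_add_single_eq_single_add_single (one_ne_zero (α := ℕ)) (one_ne_zero (α := ℕ)),
    Fin.reduceEq, Fin.isValue,
    show Fin.succ (0 : Fin 1) = 1 from rfl, show Fin.succ (0 : Fin 2) = 1 from rfl, show Fin.succ (1 : Fin 2) = 2 from rfl, show Fin.succ (0 : Fin 3) = 1 from rfl, show Fin.succ (1 : Fin 3) = 2 from rfl, show Fin.succ (2 : Fin 3) = 3 from rfl, show Fin.succ (0 : Fin 4) = 1 from rfl, show Fin.succ (1 : Fin 4) = 2 from rfl, show Fin.succ (2 : Fin 4) = 3 from rfl, show Fin.succ (3 : Fin 4) = 4 from rfl, show Fin.succ (0 : Fin 5) = 1 from rfl, show Fin.succ (1 : Fin 5) = 2 from rfl, show Fin.succ (2 : Fin 5) = 3 from rfl, show Fin.succ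 (3 : Fin 5) = 4 from rfl, show Fin.succ (4 : Fin 5) = 5 from rfl] at E01
  norm_num at E01
  have E23 := coeff_mem_J hg (Finsupp.single 2 1 + Finsupp.single 3 1) (mono_le 2 3 (by decide))
  simp only [coeff_sum, Fin.sum_univ_six, hx, Matrix.cons_val_zero, Matrix.cons_val_one,
    Matrix.head_cons, Matrix.cons_val_two, Matrix.tail_cons, Matrix.cons_val_three,
    Matrix.cons_val_four, Fin.sum_univ_succ, Matrix.cons_val_succ, Finset.sum_singleton, Fin.sum_univ_zero, coeff_smul, smul_eq_mul,
    show (9 : MvPolynomial (Fin 4) ℂ) = C (9:ℂ) by rw [map_ofNat],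
    mul_sub, sub_mul, mul_assoc, coeff_add, coeff_sub, coeff_C_mul, coeff_XX,
    pullX, Finsupp.single_add_single_eq_single_add_single (one_ne_zero (α := ℕ)) (one_ne_zero (α := ℕ)),
    Fin.reduceEq, Fin.isValue,
    show Fin.succ (0 : Fin 1) = 1 from rfl, show Fin.succ (0 : Fin 2) = 1 from rfl, show Fin.succ (1 : Fin 2) = 2 from rfl, show Fin.succ (0 : Fin 3) = 1 from rfl, show Fin.succ (1 : Fin 3) = 2 from rfl, show Fin.succ (2 : Fin 3) = 3 from rfl, show Fin.succ (0 : Fin 4) = 1 from rfl, show Fin.succ (1 : Fin 4) = 2 from rfl, show Fin.succ (2 : Fin 4) = 3 from rfl, show Fin.succ (3 : Fin 4) = 4 from rfl, show Fin.succ (0 : Fin 5) = 1 from rfl, show Fin.succ (1 : Fin 5) = 2 from rfl, show Fin.succ (2 : Fin 5) = 3 from rfl, show Fin.succ (3 : Fin 5) = 4 from rfl, show Fin.succ (4 : Fin 5) = 5 from rfl] at E23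
  norm_num at E23
  have E02 := coeff_mem_J hg (Finsupp.single 0 1 + Finsupp.single 2 1) (mono_le 0 2 (by decide))
  simp only [coeff_sum, Fin.sum_univ_six, hx, Matrix.cons_val_zero, Matrix.cons_val_one,
    Matrix.head_cons, Matrix.cons_val_two, Matrix.tail_cons, Matrix.cons_val_three,
    Matrix.cons_val_four, Fin.sum_univ_succ, Matrix.cons_val_succ, Finset.sum_singleton, Fin.sum_univ_zero, coeff_smul, smul_eq_mul,
    show (9 : MvPolynomial (Fin 4) ℂ) = C (9:ℂ) by rw [map_ofNat],
    mul_sub, sub_mul, mul_assoc, coeff_add, coeff_sub, coeff_C_mul, coeff_XX,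
    pullX, Finsupp.single_add_single_eq_single_add_single (one_ne_zero (α := ℕ)) (one_ne_zero (α := ℕ)),
    Fin.reduceEq, Fin.isValue,
    show Fin.succ (0 : Fin 1) = 1 from rfl, show Fin.succ (0 : Fin 2) = 1 from rfl, show Fin.succ (1 : Fin 2) = 2 from rfl, show Fin.succ (0 : Fin 3) = 1 from rfl, show Fin.succ (1 : Fin 3) = 2 from rfl, show Fin.succ (2 : Fin 3) = 3 from rfl, show Fin.succ (0 : Fin 4) = 1 from rfl, show Fin.succ (1 : Fin 4) = 2 from rfl, show Fin.succ (2 : Fin 4) = 3 from rfl, show Fin.succ (3 : Fin 4) = 4 from rfl, show Fin.succ (0 : Fin 5) = 1 from rfl, show Fin.succ (1 : Fin 5) = 2 from rfl, show Fin.succ (2 : Fin 5) = 3 from rfl, show Fin.succ (3 : Fin 5) = 4 from rfl, show Fin.succ (4 : Fin 5) = 5 from rfl] at E02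
  norm_num at E02
  have E13 := coeff_mem_J hg (Finsupp.single 1 1 + Finsupp.single 3 1) (mono_le 1 3 (by decide))
  simp only [coeff_sum, Fin.sum_univ_six, hx, Matrix.cons_val_zero, Matrix.cons_val_one,
    Matrix.head_cons, Matrix.cons_val_two, Matrix.tail_cons, Matrix.cons_val_three,
    Matrix.cons_val_four, Fin.sum_univ_succ, Matrix.cons_val_succ, Finset.sum_singleton, Fin.sum_univ_zero, coeff_smul, smul_eq_mul,
    show (9 : MvPolynomial (Fin 4) ℂ) = C (9:ℂ) by rw [map_ofNat],
    mul_sub, sub_mul, mul_assoc, coeff_add, coeff_sub, coeff_C_mul, coeff_XX,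
    pullX, Finsupp.single_add_single_eq_single_add_single (one_ne_zero (α := ℕ)) (one_ne_zero (α := ℕ)),
    Fin.reduceEq, Fin.isValue,
    show Fin.succ (0 : Fin 1) = 1 from rfl, show Fin.succ (0 : Fin 2) = 1 from rfl, show Fin.succ (1 : Fin 2) = 2 from rfl, show Fin.succ (0 : Fin 3) = 1 from rfl, show Fin.succ (1 : Fin 3) = 2 from rfl, show Fin.succ (2 : Fin 3) = 3 from rfl, show Fin.succ (0 : Fin 4) = 1 from rfl, show Fin.succ (1 : Fin 4) = 2 from rfl, show Fin.succ (2 : Fin 4) = 3 from rfl, show Fin.succ (3 : Fin 4) = 4 from rfl, show Fin.succ (0 : Fin 5) = 1 from rfl, show Fin.succ (1 : Fin 5) = 2 from rfl, show Fin.succ (2 : Fin 5) = 3 from rfl, show Fin.succ (3 : Fin 5) = 4 from rfl, show Fin.succ (4 : Fin 5) = 5 from rfl] at E13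
  norm_num at E13
  have E12 := coeff_mem_J hg (Finsupp.single 1 1 + Finsupp.single 2 1) (mono_le 1 2 (by decide))
  simp only [coeff_sum, Fin.sum_univ_six, hx, Matrix.cons_val_zero, Matrix.cons_val_one,
    Matrix.head_cons, Matrix.cons_val_two, Matrix.tail_cons, Matrix.cons_val_three,
    Matrix.cons_val_four, Fin.sum_univ_succ, Matrix.cons_val_succ, Finset.sum_singleton, Fin.sum_univ_zero, coeff_smul, smul_eq_mul,
    show (9 : MvPolynomial (Fin 4) ℂ) = C (9:ℂ) by rw [map_ofNat],
    mul_sub, sub_mul, mul_assoc, coeff_add, coeff_sub, coeff_C_mul, coeff_XX,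
    pullX, Finsupp.single_add_single_eq_single_add_single (one_ne_zero (α := ℕ)) (one_ne_zero (α := ℕ)),
    Fin.reduceEq, Fin.isValue,
    show Fin.succ (0 : Fin 1) = 1 from rfl, show Fin.succ (0 : Fin 2) = 1 from rfl, show Fin.succ (1 : Fin 2) = 2 from rfl, show Fin.succ (0 : Fin 3) = 1 from rfl, show Fin.succ (1 : Fin 3) = 2 from rfl, show Fin.succ (2 : Fin 3) = 3 from rfl, show Fin.succ (0 : Fin 4) = 1 from rfl, show Fin.succ (1 : Fin 4) = 2 from rfl, show Fin.succ (2 : Fin 4) = 3 from rfl, show Fin.succ (3 : Fin 4) = 4 from rfl, show Fin.succ (0 : Fin 5) = 1 from rfl, show Fin.succ (1 : Fin 5) = 2 from rfl, show Fin.succ (2 : Fin 5) = 3 from rfl, show Fin.succ (3 : Fin 5) = 4 from rfl, show Fin.succ (4 : Fin 5) = 5 from rfl] at E12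
  norm_num at E12
  have E03 := coeff_mem_J hg (Finsupp.single 0 1 + Finsupp.single 3 1) (mono_le 0 3 (by decide))
  simp only [coeff_sum, Fin.sum_univ_six, hx, Matrix.cons_val_zero, Matrix.cons_val_one,
    Matrix.head_cons, Matrix.cons_val_two, Matrix.tail_cons, Matrix.cons_val_three,
    Matrix.cons_val_four, Fin.sum_univ_succ, Matrix.cons_val_succ, Finset.sum_singleton, Fin.sum_univ_zero, coeff_smul, smul_eq_mul,
    show (9 : MvPolynomial (Fin 4) ℂ) = C (9:ℂ) by rw [map_ofNat],
    mul_sub, sub_mul, mul_assoc, coeff_add, coeff_sub, coeff_C_mul, coeff_XX,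
    pullX, Finsupp.single_add_single_eq_single_add_single (one_ne_zero (α := ℕ)) (one_ne_zero (α := ℕ)),
    Fin.reduceEq, Fin.isValue,
    show Fin.succ (0 : Fin 1) = 1 from rfl, show Fin.succ (0 : Fin 2) = 1 from rfl, show Fin.succ (1 : Fin 2) = 2 from rfl, show Fin.succ (0 : Fin 3) = 1 from rfl, show Fin.succ (1 : Fin 3) = 2 from rfl, show Fin.succ (2 : Fin 3) = 3 from rfl, show Fin.succ (0 : Fin 4) = 1 from rfl, show Fin.succ (1 : Fin 4) = 2 from rfl, show Fin.succ (2 : Fin 4) = 3 from rfl, show Fin.succ (3 : Fin 4) = 4 from rfl, show Fin.succ (0 : Fin 5) = 1 from rfl, show Fin.succ (1 : Fin 5) = 2 from rfl, show Fin.succ (2 : Fin 5) = 3 from rfl, show Fin.succ (3 : Fin 5) = 4 from rfl, show Fin.succ (4 : Fin 5) = 5 from rfl] at E03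
  norm_num at E03
  -- solve the linear system
  have t5 : (2 * a + 1) * (9 * g 5) = 0 := by linear_combination E01 - E23 + 9 * g 5 * ha
  have h5 : g 5 = 0 := by
    rcases mul_eq_zero.mp t5 with h | h
    · exact absurd h h21
    · linear_combination h / 9
  have h4 : g 4 = 0 := by linear_combination E01 / 9 - a * h5
  have t12 : (2 * a + 1) * (g 1 - g 2) = 0 := by
    linear_combination (E12 - E03) / 9 + (a - a ^ 2) * h5 + (g 1 - g 2) * ha
  have u12 : g 1 - g 2 = 0 := by
    rcases mul_eq_zero.mp t12 with h | h
    · exact absurd h h21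
    · exact h
  have t3 : (2 * a + 1) * (g 3 - g 1 - g 2) = 0 := by
    linear_combination (E13 - E02) / 9 - (g 1 + g 2) * ha - (a ^ 2 - a - 1) * g 3 * ha
  have u3 : g 3 - g 1 - g 2 = 0 := by
    rcases mul_eq_zero.mp t3 with h | h
    · exact absurd h h21
    · exact h
  have t1 : (27 : ℂ) * g 1 = 0 := by
    linear_combination -(E02 + E12) + (-9 * g 1 + 9 * (2 - a) * g 3) * ha - 9 * (a + 2) * u3 +
      9 * (a + 2) * u12 - 9 * h4 - 9 * a * h5
  have h1 : g 1 = 0 := by linear_combination t1 / 27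
  have h2 : g 2 = 0 := by linear_combination h1 - u12
  have h3 : g 3 = 0 := by linear_combination u3 + h1 + h2
  have h0 : g 0 = 0 := by linear_combination E02 / 9 - a * h1 - a * h2 - a ^ 2 * h3
  intro i
  fin_cases i
  exacts [h0, h1, h2, h3, h4, h5]
end

section
/- Let $(A, B)$ and $(A', B')$ be matrix factorizations of $g \in Q$ and $g' \in Q'$ respectively (over $k$-algebras $Q, Q'$). Then the tensor product matrix factorization over $Q \otimes_k Q'$, given in block form by the pair $\left(\begin{pmatrix} A \otimes 1 & -1 \otimes A' \\ 1 \otimes B' & B \otimes 1\end{pmatrix}, \begin{pmatrix} B \otimes 1 & 1 \otimes A' \\ -1 \otimes B' & A \otimes 1\end{pmatrix}\right)$, is a matrix factorization of $g \otimes 1 + 1 \otimes g'$. -/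
open TensorProduct

open Matrix Kronecker in
private lemma aux1 {k : Type*} [CommRing k] {Q Q' : Type*} [CommRing Q] [CommRing Q']
    [Algebra k Q] [Algebra k Q'] {r r' : ℕ} (s : Q) :
    (s • (1 : Matrix (Fin r) (Fin r) Q)) ⊗ₖₜ[k] (1 : Matrix (Fin r') (Fin r') Q')
      = (s ⊗ₜ[k] (1 : Q')) • 1 := by
  ext ⟨i, i'⟩ ⟨j, j'⟩
  simp only [Matrix.kroneckerTMul_apply, Matrix.smul_apply, Matrix.one_apply, smul_eq_mul,
    Prod.mk.injEq]
  split_ifs with h1 h2 h2 <;> simp_all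

open Matrix Kronecker in
private lemma aux2 {k : Type*} [CommRing k] {Q Q' : Type*} [CommRing Q] [CommRing Q']
    [Algebra k Q] [Algebra k Q'] {r r' : ℕ} (s : Q') :
    (1 : Matrix (Fin r) (Fin r) Q) ⊗ₖₜ[k] (s • (1 : Matrix (Fin r') (Fin r') Q'))
      = ((1 : Q) ⊗ₜ[k] s) • 1 := by
  ext ⟨i, i'⟩ ⟨j, j'⟩
  simp only [Matrix.kroneckerTMul_apply, Matrix.smul_apply, Matrix.one_apply, smul_eq_mul,
    Prod.mk.injEq]
  split_ifs with h1 h2 h2 <;> simp_all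

/-- the tensor product of a matrix factorization `(A, B)` of `g` over `Q`
and a matrix factorization `(A', B')` of `g'` over `Q'`, given by the indicated block
matrices over `Q ⊗ₖ Q'`, is a matrix factorization of `g ⊗ 1 + 1 ⊗ g'`. -/
theorem stmt_17 (k : Type*) [CommRing k] (Q Q' : Type*) [CommRing Q] [CommRing Q']
    [Algebra k Q] [Algebra k Q'] (g : Q) (g' : Q') (r r' : ℕ)
    (A B : Matrix (Fin r) (Fin r) Q) (A' B' : Matrix (Fin r') (Fin r') Q')
    (hAB : A * B = g • 1) (hBA : B * A = g • 1)
    (hA'B' : A' * B' = g' • 1) (hB'A' : B' * A' = g' • 1) :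
    let tm : Q → Q' → Q ⊗[k] Q' := fun a b => a ⊗ₜ[k] b
    let C : Matrix (Fin r × Fin r' ⊕ Fin r × Fin r') (Fin r × Fin r' ⊕ Fin r × Fin r')
        (Q ⊗[k] Q') :=
      Matrix.fromBlocks
        (Matrix.kroneckerMap tm A 1) (-(Matrix.kroneckerMap tm 1 A'))
        (Matrix.kroneckerMap tm 1 B') (Matrix.kroneckerMap tm B 1)
    let D : Matrix (Fin r × Fin r' ⊕ Fin r × Fin r') (Fin r × Fin r' ⊕ Fin r × Fin r')
        (Q ⊗[k] Q') :=
      Matrix.fromBlocks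
        (Matrix.kroneckerMap tm B 1) (Matrix.kroneckerMap tm 1 A')
        (-(Matrix.kroneckerMap tm 1 B')) (Matrix.kroneckerMap tm A 1)
    C * D = (g ⊗ₜ[k] (1 : Q') + (1 : Q) ⊗ₜ[k] g') • 1 ∧
      D * C = (g ⊗ₜ[k] (1 : Q') + (1 : Q) ⊗ₜ[k] g') • 1 := by
  intro tm C D
  open Kronecker in
  have htm : ∀ {X : Matrix (Fin r) (Fin r) Q} {Y : Matrix (Fin r') (Fin r') Q'},
      Matrix.kroneckerMap tm X Y = X ⊗ₖₜ[k] Y := fun {X Y} => rfl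
  have key : ∀ (X Y : Matrix (Fin r) (Fin r) Q) (X' Y' : Matrix (Fin r') (Fin r') Q'),
      (X * Y = g • 1) → (X' * Y' = g' • 1) →
      Matrix.kroneckerMap tm X 1 * Matrix.kroneckerMap tm Y 1
        + Matrix.kroneckerMap tm 1 X' * Matrix.kroneckerMap tm 1 Y'
        = (g ⊗ₜ[k] (1 : Q') + (1 : Q) ⊗ₜ[k] g')
            • (1 : Matrix (Fin r × Fin r') (Fin r × Fin r') (Q ⊗[k] Q')) := by
    intro X Y X' Y' h h'
    simp only [htm]
    rw [← Matrix.mul_kroneckerTMul_mul, ← Matrix.mul_kroneckerTMul_mul,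
      h, h', one_mul, one_mul, aux1, aux2, add_smul]
  have comm : ∀ (X : Matrix (Fin r) (Fin r) Q) (X' : Matrix (Fin r') (Fin r') Q'),
      Matrix.kroneckerMap tm X 1 * Matrix.kroneckerMap tm 1 X'
        = Matrix.kroneckerMap tm 1 X' * Matrix.kroneckerMap tm X 1 := by
    intro X X'
    simp only [htm]
    rw [← Matrix.mul_kroneckerTMul_mul, ← Matrix.mul_kroneckerTMul_mul,
      one_mul, mul_one, one_mul, mul_one]
  set s : Q ⊗[k] Q' := g ⊗ₜ[k] (1 : Q') + (1 : Q) ⊗ₜ[k] g' with hs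
  constructor
  · show Matrix.fromBlocks _ _ _ _ * Matrix.fromBlocks _ _ _ _ = _
    rw [Matrix.fromBlocks_multiply]
    rw [show Matrix.kroneckerMap tm A 1 * Matrix.kroneckerMap tm B 1 +
        -Matrix.kroneckerMap tm 1 A' * -Matrix.kroneckerMap tm 1 B'
        = s • (1 : Matrix (Fin r × Fin r') (Fin r × Fin r') (Q ⊗[k] Q')) by
      rw [neg_mul_neg]; exact key A B A' B' hAB hA'B']
    rw [show Matrix.kroneckerMap tm A 1 * Matrix.kroneckerMap tm 1 A' +
        -Matrix.kroneckerMap tm 1 A' * Matrix.kroneckerMap tm A 1 = 0 by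
      rw [neg_mul, comm A A', add_neg_cancel]]
    rw [show Matrix.kroneckerMap tm 1 B' * Matrix.kroneckerMap tm B 1 +
        Matrix.kroneckerMap tm B 1 * -Matrix.kroneckerMap tm 1 B' = 0 by
      rw [mul_neg, ← comm B B', add_neg_cancel]]
    rw [show Matrix.kroneckerMap tm 1 B' * Matrix.kroneckerMap tm 1 A' +
        Matrix.kroneckerMap tm B 1 * Matrix.kroneckerMap tm A 1
        = s • (1 : Matrix (Fin r × Fin r') (Fin r × Fin r') (Q ⊗[k] Q')) by
      rw [add_comm]; exact key B A B' A' hBA hB'A']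
    rw [← Matrix.fromBlocks_one, Matrix.fromBlocks_smul, smul_zero]
  · show Matrix.fromBlocks _ _ _ _ * Matrix.fromBlocks _ _ _ _ = _
    rw [Matrix.fromBlocks_multiply]
    rw [show Matrix.kroneckerMap tm B 1 * Matrix.kroneckerMap tm A 1 +
        Matrix.kroneckerMap tm 1 A' * Matrix.kroneckerMap tm 1 B'
        = s • (1 : Matrix (Fin r × Fin r') (Fin r × Fin r') (Q ⊗[k] Q')) from
      key B A A' B' hBA hA'B']
    rw [show Matrix.kroneckerMap tm B 1 * -Matrix.kroneckerMap tm 1 A' +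
        Matrix.kroneckerMap tm 1 A' * Matrix.kroneckerMap tm B 1 = 0 by
      rw [mul_neg, comm B A', neg_add_cancel]]
    rw [show -Matrix.kroneckerMap tm 1 B' * Matrix.kroneckerMap tm A 1 +
        Matrix.kroneckerMap tm A 1 * Matrix.kroneckerMap tm 1 B' = 0 by
      rw [neg_mul, ← comm A B', neg_add_cancel]]
    rw [show -Matrix.kroneckerMap tm 1 B' * -Matrix.kroneckerMap tm 1 A' +
        Matrix.kroneckerMap tm A 1 * Matrix.kroneckerMap tm B 1
        = s • (1 : Matrix (Fin r × Fin r') (Fin r × Fin r') (Q ⊗[k] Q')) by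
      rw [neg_mul_neg, add_comm]; exact key A B B' A' hAB hB'A']
    rw [← Matrix.fromBlocks_one, Matrix.fromBlocks_smul, smul_zero]
end
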